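/- arXiv:cond-mat/0203558 — 2 statements merged into one kernel-verified Lean document; each statement's English description precedes it below -/
import Mathlib

section
/- Let α ∈ (0,1) and let X be a real random variable with E[max(0,−X)] < ∞. Then the set of minimizers of the function s ↦ −(1−α)^{−1}( E[X·1{−X ≥ s}] + s·(α − P[−X < s]) ) over s ∈ ℝ is exactly the closed interval [q_α(−X), −q_{1−α}(X)]; in particular this interval is non-empty. -/
open MeasureTheory Set

/-- The `α`-quantile of a real random variable `X`:
`q_α(X) = inf {x ∈ ℝ : P[X ≤ x] ≥ α}`. -/
noncomputable def quantile {Ω : Type*} [MeasurableSpace Ω] (μ : Measure Ω)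
    (X : Ω → ℝ) (α : ℝ) : ℝ :=
  sInf {x : ℝ | ENNReal.ofReal α ≤ μ {ω | X ω ≤ x}}

/-- The objective function `s ↦ -(1-α)⁻¹ (E[X·1{-X ≥ s}] + s·(α - P[-X < s]))`. -/
noncomputable def shortfallObjective {Ω : Type*} [MeasurableSpace Ω] (μ : Measure Ω)
    (X : Ω → ℝ) (α : ℝ) (s : ℝ) : ℝ :=
  - (1 - α)⁻¹ * ((∫ ω in {ω | s ≤ - X ω}, X ω ∂μ) + s * (α - (μ {ω | - X ω < s}).toReal))

/-!
With `Y = -X` the objective equals `(1 - α)⁻¹ (E[max Y s] - α s)`. For `s ≤ t` the increment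
`E[max Y t] - E[max Y s]` lies between `(t - s) F(s)` and `(t - s) F(t-)`, where `F` is the
distribution function of `Y`, so the right and left slopes of `E[max Y s] - α s` at `s` are
`F(s) - α` and `F(s-) - α`. Hence `s` is a minimizer iff `F(s-) ≤ α ≤ F(s)`: the second
inequality says `q_α(Y) ≤ s`, the first says `q_{1-α}(X) ≤ -s`. The point `s = q_α(Y)` satisfies
both, so the interval is non-empty.
-/

open Filter Function Topology ProbabilityTheory

namespace StieltjesFunction

variable (F : StieltjesFunction ℝ) {a : ℝ}

lemma nonempty_setOf_le {u : ℝ} (hF : Tendsto F atTop (𝓝 u)) (hu : a < u) :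
    {x | a ≤ F x}.Nonempty :=
  let ⟨x, hx⟩ := (hF.eventually (eventually_gt_nhds hu)).exists
  ⟨x, hx.le⟩

lemma bddBelow_setOf_le {l : ℝ} (hF : Tendsto F atBot (𝓝 l)) (hl : l < a) :
    BddBelow {x | a ≤ F x} := by
  obtain ⟨b, hb⟩ := eventually_atBot.1 (hF.eventually (eventually_lt_nhds hl))
  exact ⟨b, fun x hx => le_of_not_gt fun hxb => (hb x hxb.le).not_ge hx⟩

lemma exists_gt_lt_of_lt {s : ℝ} (hs : F s < a) : ∃ t > s, F t < a :=
  let ⟨t, ht, hts⟩ := (((F.right_continuous s).mono Ioi_subset_Ici_self).eventually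
    (eventually_lt_nhds hs)).and self_mem_nhdsWithin |>.exists
  ⟨t, hts, ht⟩

lemma exists_lt_lt_of_lt_leftLim {s : ℝ} (hs : a < leftLim F s) : ∃ t < s, a < F t :=
  let ⟨t, ht, hts⟩ := ((F.mono.tendsto_leftLim s).eventually
    (eventually_gt_nhds hs)).and self_mem_nhdsWithin |>.exists
  ⟨t, hts, ht⟩

lemma csInf_setOf_le_le_iff (hne : {x | a ≤ F x}.Nonempty) (hbdd : BddBelow {x | a ≤ F x})
    {s : ℝ} : sInf {x | a ≤ F x} ≤ s ↔ a ≤ F s := by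
  refine ⟨fun hs => le_of_not_gt fun hFs => ?_, fun hs => csInf_le hbdd hs⟩
  obtain ⟨t, hst, ht⟩ := F.exists_gt_lt_of_lt hFs
  obtain ⟨y, hy, hyt⟩ := exists_lt_of_csInf_lt hne (hs.trans_lt hst)
  exact (hy.trans (F.mono hyt.le)).not_gt ht

lemma leftLim_csInf_setOf_le_le (hbdd : BddBelow {x | a ≤ F x}) :
    leftLim F (sInf {x | a ≤ F x}) ≤ a :=
  le_of_not_gt fun h =>
    let ⟨_, hts, ht⟩ := F.exists_lt_lt_of_lt_leftLim h
    notMem_of_lt_csInf hts hbdd ht.le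

lemma forall_le_iff_leftLim_le_and_le {h : ℝ → ℝ}
    (hlower : ∀ s t, s ≤ t → (t - s) * (F s - a) ≤ h t - h s)
    (hupper : ∀ s t, s ≤ t → h t - h s ≤ (t - s) * (leftLim F t - a)) (s : ℝ) :
    (∀ t, h s ≤ h t) ↔ leftLim F s ≤ a ∧ a ≤ F s := by
  refine ⟨fun hmin => ⟨le_of_not_gt fun hs => ?_, le_of_not_gt fun hs => ?_⟩, ?_⟩
  · obtain ⟨t, hts, ht⟩ := F.exists_lt_lt_of_lt_leftLim hs
    nlinarith [hlower t s hts.le, hmin t]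
  · obtain ⟨t, hst, ht⟩ := F.exists_gt_lt_of_lt hs
    nlinarith [hupper s t hst.le, hmin t, F.mono.leftLim_le (le_refl t)]
  · rintro ⟨hl, hr⟩ t
    rcases le_total s t with hst | hts
    · nlinarith [hlower s t hst]
    · nlinarith [hupper t s hts]

end StieltjesFunction

section Integral

variable {Ω : Type*} [MeasurableSpace Ω] {μ : Measure Ω} [IsFiniteMeasure μ] {Y : Ω → ℝ}

lemma integrable_max_const (hY : Measurable Y) (hint : Integrable (fun ω => max 0 (Y ω)) μ)
    (s : ℝ) : Integrable (fun ω => max (Y ω) s) μ := by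
  refine (hint.add (integrable_const |s|)).mono' (hY.max measurable_const).aestronglyMeasurable
    (Eventually.of_forall fun ω => ?_)
  have hle : Y ω ≤ max 0 (Y ω) := le_max_right 0 (Y ω)
  have h₀ : 0 ≤ max 0 (Y ω) := le_max_left 0 (Y ω)
  rw [Pi.add_apply, Real.norm_eq_abs, abs_le]
  exact ⟨by linarith [neg_abs_le s, le_max_right (Y ω) s],
    max_le (by linarith [abs_nonneg s]) (by linarith [le_abs_self s])⟩

lemma mul_measureReal_le_le_integral_max_sub (hY : Measurable Y)
    (hint : Integrable (fun ω => max 0 (Y ω)) μ) {s t : ℝ} (hst : s ≤ t) :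
    (t - s) * μ.real {ω | Y ω ≤ s} ≤ ∫ ω, max (Y ω) t ∂μ - ∫ ω, max (Y ω) s ∂μ := by
  have hA : MeasurableSet {ω | Y ω ≤ s} := measurableSet_le hY measurable_const
  rw [← integral_sub (integrable_max_const hY hint t) (integrable_max_const hY hint s), mul_comm,
    ← smul_eq_mul, ← integral_indicator_const _ hA]
  refine integral_mono ((integrable_const _).indicator hA)
    ((integrable_max_const hY hint t).sub (integrable_max_const hY hint s)) fun ω => ?_
  by_cases h : Y ω ≤ s
  · simp [h, max_eq_right (h.trans hst)]
  · simp [h, max_le_max le_rfl hst]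

lemma integral_max_sub_le_mul_measureReal_lt (hY : Measurable Y)
    (hint : Integrable (fun ω => max 0 (Y ω)) μ) {s t : ℝ} (hst : s ≤ t) :
    ∫ ω, max (Y ω) t ∂μ - ∫ ω, max (Y ω) s ∂μ ≤ (t - s) * μ.real {ω | Y ω < t} := by
  have hA : MeasurableSet {ω | Y ω < t} := measurableSet_lt hY measurable_const
  rw [← integral_sub (integrable_max_const hY hint t) (integrable_max_const hY hint s), mul_comm,
    ← smul_eq_mul, ← integral_indicator_const _ hA]
  refine integral_mono ((integrable_max_const hY hint t).sub (integrable_max_const hY hint s))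
    ((integrable_const _).indicator hA) fun ω => ?_
  by_cases h : Y ω < t
  · simp only [indicator_of_mem (show ω ∈ {ω | Y ω < t} from h)]
    cases max_cases (Y ω) t <;> cases max_cases (Y ω) s <;> linarith
  · simp [h, max_eq_left (not_lt.1 h), max_eq_left ((hst.trans (not_lt.1 h)))]

lemma shortfallObjective_eq {X : Ω → ℝ} (hX : Measurable X)
    (hint : Integrable (fun ω => max 0 (-X ω)) μ) (a s : ℝ) :
    shortfallObjective μ X a s = (1 - a)⁻¹ * (∫ ω, max (-X ω) s ∂μ - a * s) := by
  have hY : Measurable fun ω => -X ω := hX.neg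
  have hA : MeasurableSet {ω | s ≤ -X ω} := measurableSet_le measurable_const hY
  have hcompl : {ω | s ≤ -X ω}ᶜ = {ω | -X ω < s} := by ext; simp
  have hsplit : ∫ ω, max (-X ω) s ∂μ =
      -∫ ω in {ω | s ≤ -X ω}, X ω ∂μ + s * μ.real {ω | -X ω < s} := by
    rw [← integral_add_compl hA (integrable_max_const hY hint s),
      setIntegral_congr_fun hA fun ω hω => max_eq_left hω, integral_neg,
      setIntegral_congr_fun hA.compl fun ω (hω : ¬s ≤ -X ω) => max_eq_right (not_le.1 hω).le,
      setIntegral_const, hcompl, smul_eq_mul, mul_comm]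
  rw [shortfallObjective, hsplit, measureReal_def]
  ring

end Integral

section Quantile

variable {Ω : Type*} [MeasurableSpace Ω] {μ : Measure Ω} [IsProbabilityMeasure μ] {Y : Ω → ℝ}

lemma cdf_map_eq_measureReal (hY : Measurable Y) (x : ℝ) :
    cdf (μ.map Y) x = μ.real {ω | Y ω ≤ x} := by
  have := Measure.isProbabilityMeasure_map (μ := μ) hY.aemeasurable
  rw [cdf_eq_real, map_measureReal_apply hY measurableSet_Iic]
  rfl

lemma leftLim_cdf_map_eq_measureReal (hY : Measurable Y) (x : ℝ) :
    leftLim (cdf (μ.map Y)) x = μ.real {ω | Y ω < x} := by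
  have := Measure.isProbabilityMeasure_map (μ := μ) hY.aemeasurable
  have hnonneg : 0 ≤ leftLim (cdf (μ.map Y)) x :=
    (cdf_nonneg _ (x - 1)).trans ((monotone_cdf _).le_leftLim (sub_one_lt x))
  rw [← ENNReal.toReal_ofReal hnonneg, ← sub_zero (leftLim _ x),
    ← (cdf (μ.map Y)).measure_Iio (tendsto_cdf_atBot _), measure_cdf, ← measureReal_def,
    map_measureReal_apply hY measurableSet_Iio]
  rfl

lemma quantile_eq_csInf_cdf (hY : Measurable Y) (a : ℝ) :
    quantile μ Y a = sInf {x | a ≤ cdf (μ.map Y) x} := by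
  have := Measure.isProbabilityMeasure_map (μ := μ) hY.aemeasurable
  refine congrArg sInf (Set.ext fun x => ?_)
  rw [mem_ofPred_eq, mem_ofPred_eq, ← ENNReal.ofReal_le_ofReal_iff (cdf_nonneg _ x), ofReal_cdf,
    Measure.map_apply hY measurableSet_Iic]
  rfl

lemma bddBelow_setOf_le_cdf (ν : Measure ℝ) {a : ℝ} (ha : 0 < a) :
    BddBelow {x | a ≤ cdf ν x} :=
  (cdf ν).bddBelow_setOf_le (tendsto_cdf_atBot ν) ha

lemma quantile_le_iff (hY : Measurable Y) {a : ℝ} (h0 : 0 < a) (h1 : a < 1) {s : ℝ} :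
    quantile μ Y a ≤ s ↔ a ≤ cdf (μ.map Y) s := by
  rw [quantile_eq_csInf_cdf hY]
  exact (cdf _).csInf_setOf_le_le_iff ((cdf _).nonempty_setOf_le (tendsto_cdf_atTop _) h1)
    (bddBelow_setOf_le_cdf _ h0)

lemma leftLim_cdf_map_quantile_le (hY : Measurable Y) {a : ℝ} (h0 : 0 < a) :
    leftLim (cdf (μ.map Y)) (quantile μ Y a) ≤ a := by
  rw [quantile_eq_csInf_cdf hY]
  exact (cdf _).leftLim_csInf_setOf_le_le (bddBelow_setOf_le_cdf _ h0)

lemma le_neg_quantile_iff {X : Ω → ℝ} (hX : Measurable X) {a : ℝ} (h0 : 0 < a) (h1 : a < 1)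
    {s : ℝ} : s ≤ -quantile μ X (1 - a) ↔ leftLim (cdf (μ.map fun ω => -X ω)) s ≤ a := by
  have hY : Measurable fun ω => -X ω := hX.neg
  have hcompl : {ω | -X ω < s} = {ω | X ω ≤ -s}ᶜ := by ext; simp [neg_lt]
  rw [le_neg, quantile_le_iff hX (by linarith) (by linarith), cdf_map_eq_measureReal hX,
    leftLim_cdf_map_eq_measureReal hY, hcompl,
    measureReal_compl (measurableSet_le hX measurable_const), probReal_univ]
  constructor <;> intro <;> linarith

end Quantile

/-- The set of minimizers of `s ↦ -(1-α)⁻¹ (E[X·1{-X ≥ s}] + s·(α - P[-X < s]))` is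
exactly the closed interval `[q_α(-X), -q_{1-α}(X)]`, which in particular is non-empty. -/
theorem shortfallObjective_argmin {Ω : Type*} [MeasurableSpace Ω] (μ : Measure Ω)
    [IsProbabilityMeasure μ] (α : ℝ) (hα : α ∈ Set.Ioo (0 : ℝ) 1)
    (X : Ω → ℝ) (hX : Measurable X)
    (hint : Integrable (fun ω => max 0 (- X ω)) μ) :
    {s : ℝ | ∀ t : ℝ, shortfallObjective μ X α s ≤ shortfallObjective μ X α t}
        = Set.Icc (quantile μ (fun ω => - X ω) α) (- quantile μ X (1 - α)) ∧
      quantile μ (fun ω => - X ω) α ≤ - quantile μ X (1 - α) := by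
  obtain ⟨h0, h1⟩ := hα
  have hY : Measurable fun ω => -X ω := hX.neg
  set F := cdf (μ.map fun ω => -X ω)
  have hmin (s : ℝ) : (∀ t, shortfallObjective μ X α s ≤ shortfallObjective μ X α t) ↔
      leftLim F s ≤ α ∧ α ≤ F s := by
    simp only [shortfallObjective_eq hX hint, mul_le_mul_iff_right₀ (inv_pos.2 (sub_pos.2 h1))]
    refine F.forall_le_iff_leftLim_le_and_le (h := fun s => ∫ ω, max (-X ω) s ∂μ - α * s)
      (fun s t hst => ?_) (fun s t hst => ?_) s
    · rw [cdf_map_eq_measureReal hY]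
      linarith [mul_measureReal_le_le_integral_max_sub hY hint hst]
    · rw [leftLim_cdf_map_eq_measureReal hY]
      linarith [integral_max_sub_le_mul_measureReal_lt hY hint hst]
  have hIcc (s : ℝ) : leftLim F s ≤ α ∧ α ≤ F s ↔
      s ∈ Icc (quantile μ (fun ω => -X ω) α) (-quantile μ X (1 - α)) := by
    rw [mem_Icc, quantile_le_iff hY h0 h1, le_neg_quantile_iff hX h0 h1, and_comm]
  have hq_mem := (hIcc _).1 ⟨leftLim_cdf_map_quantile_le hY h0,
    (quantile_le_iff hY h0 h1).1 le_rfl⟩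
  exact ⟨Set.ext fun s => (hmin s).trans (hIcc s), hq_mem.1.trans hq_mem.2⟩
end

section
/- Let X, Y be real random variables on a probability space (Ω, ℱ, P) with E[|Y|] < ∞, and let α ∈ (0,1). Let g : ℝ → ℝ be any Borel measurable function such that g∘X is a version of the conditional expectation of Y given the σ-algebra generated by X. Then ∫_α^1 g(−VaR_u(X)) du = E[Y·1{−X ≥ q_α(−X)}] + g(−q_α(−X))·(P[−X < q_α(−X)] − α), where the left-hand side is the Lebesgue integral over u ∈ (α,1). In particular, the value of ∫_α^1 g(−VaR_u(X)) du is the same for every such version g. -/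
open MeasureTheory Set

/-- Value-at-risk at level `α`: `VaR_α(X) = q_α(-X)`. -/
noncomputable def VaR {Ω : Type*} [MeasurableSpace Ω] (μ : Measure Ω)
    (X : Ω → ℝ) (α : ℝ) : ℝ :=
  quantile μ (fun ω => - X ω) α

/-!
Put `Z = -X` and let `ν` be its law, with distribution function `F`. The quantile function
`Q = VaR_·(X)` of `Z` satisfies `Q u ≤ x ↔ u ≤ F x` on `(0, 1)`, so it pushes Lebesgue measure on
`(0, 1)` forward to `ν`. With `q = Q α` and `f = g(-·)`, the integral `∫_α^1 f (Q u) du` splits at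
`F q`: on `(α, F q]` the quantile function is constantly `q`, contributing `f q · (F q - α)`, and
`{u > F q} = {Q u > q}` contributes `∫_{x > q} f dν`. Moving the atom `ν {q}` into the integral
turns this into `∫_{Z ≥ q} g(X) dμ + f q · (P[Z < q] - α)`, and `∫_{Z ≥ q} g(X) dμ = ∫_{Z ≥ q} Y dμ`
because `{Z ≥ q}` is `σ(X)`-measurable. Two versions of `g` agree `ν`-a.e., hence a.e. along `Q`.
-/

open ProbabilityTheory

theorem StieltjesFunction.sInf_setOf_le_le_iff (F : StieltjesFunction ℝ) {u x : ℝ}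
    (hbot : ∃ y, F y < u) (htop : ∃ y, u ≤ F y) :
    sInf {y | u ≤ F y} ≤ x ↔ u ≤ F x := by
  obtain ⟨y₀, hy₀⟩ := hbot
  have hbdd : BddBelow {y | u ≤ F y} :=
    ⟨y₀, fun y hy => le_of_lt (F.mono.reflect_lt (hy₀.trans_le hy))⟩
  refine ⟨fun h => ?_, fun h => csInf_le hbdd h⟩
  -- right continuity puts the infimum itself in the set
  have hmem : u ≤ F (sInf {y | u ≤ F y}) := by
    refine ge_of_tendsto ((F.right_continuous _).mono Ioi_subset_Ici_self) ?_
    filter_upwards [self_mem_nhdsWithin] with y hy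
    obtain ⟨z, hz, hzy⟩ := exists_lt_of_csInf_lt htop hy
    exact le_trans hz (F.mono hzy.le)
  exact hmem.trans (F.mono h)

theorem Real.volume_Ioo_inter_Iic {a b c : ℝ} (hc : c ≤ b) :
    volume (Ioo a b ∩ Iic c) = ENNReal.ofReal (c - a) := by
  refine le_antisymm ?_ ?_
  · rw [← Real.volume_Ioc]
    exact measure_mono fun u hu => ⟨hu.1.1, hu.2⟩
  · rw [← Real.volume_Ioo]
    exact measure_mono fun u hu => ⟨⟨hu.1, hu.2.trans_le hc⟩, hu.2.le⟩

theorem setIntegral_Ici_eq_add_setIntegral_Ioi {ν : Measure ℝ} [IsFiniteMeasure ν] {f : ℝ → ℝ}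
    {a : ℝ} (hf : IntegrableOn f (Ioi a) ν) :
    ∫ x in Ici a, f x ∂ν = ν.real {a} * f a + ∫ x in Ioi a, f x ∂ν := by
  rw [← Ioi_union_left, union_comm,
    setIntegral_union (t := Ioi a) (disjoint_singleton_left.2 (lt_irrefl a)) measurableSet_Ioi
      integrableOn_singleton hf,
    integral_singleton, smul_eq_mul]

theorem setIntegral_eq_of_ae_eq_condExp {Ω E : Type*} [NormedAddCommGroup E] [NormedSpace ℝ E]
    [CompleteSpace E] {m m₀ : MeasurableSpace Ω} {μ : Measure Ω} (hm : m ≤ m₀)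
    [SigmaFinite (μ.trim hm)] {Y h : Ω → E} (hY : Integrable Y μ) (hh : h =ᵐ[μ] μ[Y|m])
    {s : Set Ω} (hs : MeasurableSet[m] s) :
    ∫ ω in s, h ω ∂μ = ∫ ω in s, Y ω ∂μ := by
  rw [← setIntegral_condExp hm hY hs]
  exact integral_congr_ae (ae_restrict_of_ae hh)

section Quantile

variable {Ω : Type*} [MeasurableSpace Ω] {μ : Measure Ω} [IsProbabilityMeasure μ]
  {Z : Ω → ℝ}

theorem quantile_eq_sInf_cdf (hZ : AEMeasurable Z μ) (u : ℝ) :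
    quantile μ Z u = sInf {x | u ≤ cdf (μ.map Z) x} := by
  have := Measure.isProbabilityMeasure_map hZ
  unfold quantile
  congr 1
  ext x
  rw [mem_ofPred_eq, mem_ofPred_eq, ← ENNReal.ofReal_le_ofReal_iff (cdf_nonneg _ _), ofReal_cdf,
    Measure.map_apply_of_aemeasurable hZ measurableSet_Iic]
  rfl

theorem quantile_le_iff_le_cdf (hZ : AEMeasurable Z μ) {u : ℝ} (hu : u ∈ Ioo 0 1) (x : ℝ) :
    quantile μ Z u ≤ x ↔ u ≤ cdf (μ.map Z) x := by
  rw [quantile_eq_sInf_cdf hZ]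
  exact (cdf (μ.map Z)).sInf_setOf_le_le_iff
    ((tendsto_cdf_atBot _).eventually_lt_const hu.1).exists
    ((tendsto_cdf_atTop _).eventually_const_le hu.2).exists

theorem lt_quantile_iff_cdf_lt (hZ : AEMeasurable Z μ) {u : ℝ} (hu : u ∈ Ioo 0 1) (x : ℝ) :
    x < quantile μ Z u ↔ cdf (μ.map Z) x < u := by
  simpa only [not_le] using (quantile_le_iff_le_cdf hZ hu x).not

theorem le_cdf_quantile (hZ : AEMeasurable Z μ) {u : ℝ} (hu : u ∈ Ioo 0 1) :
    u ≤ cdf (μ.map Z) (quantile μ Z u) :=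
  (quantile_le_iff_le_cdf hZ hu _).1 le_rfl

theorem monotoneOn_quantile (hZ : AEMeasurable Z μ) : MonotoneOn (quantile μ Z) (Ioo 0 1) :=
  fun _ hu _ hv huv => (quantile_le_iff_le_cdf hZ hu _).2 (huv.trans (le_cdf_quantile hZ hv))

theorem aemeasurable_quantile (hZ : AEMeasurable Z μ) :
    AEMeasurable (quantile μ Z) (volume.restrict (Ioo 0 1)) :=
  aemeasurable_restrict_of_monotoneOn measurableSet_Ioo (monotoneOn_quantile hZ)

theorem preimage_quantile_Iic_inter_Ioo (hZ : AEMeasurable Z μ) (x : ℝ) :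
    quantile μ Z ⁻¹' Iic x ∩ Ioo 0 1 = Ioo 0 1 ∩ Iic (cdf (μ.map Z) x) := by
  ext u
  simp only [mem_inter_iff, mem_preimage, mem_Iic]
  constructor
  · rintro ⟨h, hu⟩; exact ⟨hu, (quantile_le_iff_le_cdf hZ hu x).1 h⟩
  · rintro ⟨hu, h⟩; exact ⟨(quantile_le_iff_le_cdf hZ hu x).2 h, hu⟩

theorem map_quantile (hZ : AEMeasurable Z μ) :
    (volume.restrict (Ioo 0 1)).map (quantile μ Z) = μ.map Z := by
  have := Measure.isProbabilityMeasure_map hZ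
  refine Measure.ext_of_Iic _ _ fun x => ?_
  rw [Measure.map_apply_of_aemeasurable (aemeasurable_quantile hZ) measurableSet_Iic,
    Measure.restrict_apply' measurableSet_Ioo, preimage_quantile_Iic_inter_Ioo hZ,
    Real.volume_Ioo_inter_Iic (cdf_le_one _ x), sub_zero, ofReal_cdf]

theorem integrable_comp_quantile (hZ : AEMeasurable Z μ) {f : ℝ → ℝ}
    (hf : Integrable f (μ.map Z)) :
    IntegrableOn (fun u => f (quantile μ Z u)) (Ioo 0 1) := by
  rw [← map_quantile hZ] at hf
  exact (integrable_map_measure hf.1 (aemeasurable_quantile hZ)).1 hf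

theorem setIntegral_Ioo_cdf_comp_quantile (hZ : AEMeasurable Z μ) {f : ℝ → ℝ}
    (hf : AEStronglyMeasurable f (μ.map Z)) (x : ℝ) :
    ∫ u in Ioo (cdf (μ.map Z) x) 1, f (quantile μ Z u) = ∫ y in Ioi x, f y ∂(μ.map Z) := by
  have hset : Ioo (cdf (μ.map Z) x) 1 = quantile μ Z ⁻¹' Ioi x ∩ Ioo 0 1 := by
    ext u
    simp only [mem_inter_iff, mem_preimage, mem_Ioi, mem_Ioo]
    constructor
    · rintro ⟨hxu, hu1⟩
      have hu : u ∈ Ioo 0 1 := ⟨(cdf_nonneg _ x).trans_lt hxu, hu1⟩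
      exact ⟨(lt_quantile_iff_cdf_lt hZ hu x).2 hxu, hu⟩
    · rintro ⟨hxu, hu⟩
      exact ⟨(lt_quantile_iff_cdf_lt hZ hu x).1 hxu, hu.2⟩
  rw [← map_quantile hZ] at hf
  rw [hset, ← Measure.restrict_restrict' measurableSet_Ioo,
    ← setIntegral_map measurableSet_Ioi hf (aemeasurable_quantile hZ), map_quantile hZ]

theorem setIntegral_Ioo_comp_quantile_eq_setIntegral_Ioi (hZ : AEMeasurable Z μ) {f : ℝ → ℝ}
    (hf : Integrable f (μ.map Z)) {α : ℝ} (hα : α ∈ Ioo 0 1) :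
    ∫ u in Ioo α 1, f (quantile μ Z u)
      = ∫ x in Ioi (quantile μ Z α), f x ∂(μ.map Z)
        + (cdf (μ.map Z) (quantile μ Z α) - α) * f (quantile μ Z α) := by
  set q := quantile μ Z α
  set β := cdf (μ.map Z) q
  have hαβ : α ≤ β := le_cdf_quantile hZ hα
  have hconst : ∀ u ∈ Ioo α 1 ∩ Iic β, f (quantile μ Z u) = f q := by
    rintro u ⟨⟨hαu, hu1⟩, huβ⟩
    have hu : u ∈ Ioo 0 1 := ⟨hα.1.trans hαu, hu1⟩
    rw [le_antisymm ((quantile_le_iff_le_cdf hZ hu q).2 huβ) (monotoneOn_quantile hZ hα hu hαu.le)]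
  have hrest : Ioo α 1 \ Iic β = Ioo β 1 := by
    ext u
    simp only [Set.mem_sdiff, mem_Ioo, mem_Iic, not_le]
    exact ⟨fun ⟨⟨_, hu1⟩, hβu⟩ => ⟨hβu, hu1⟩, fun ⟨hβu, hu1⟩ => ⟨⟨hαβ.trans_lt hβu, hu1⟩, hβu⟩⟩
  rw [← integral_inter_add_sdiff measurableSet_Iic
      ((integrable_comp_quantile hZ hf).mono_set (Ioo_subset_Ioo_left hα.1.le)),
    setIntegral_congr_fun (measurableSet_Ioo.inter measurableSet_Iic) hconst, setIntegral_const,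
    hrest, setIntegral_Ioo_cdf_comp_quantile hZ hf.1, measureReal_def,
    Real.volume_Ioo_inter_Iic (cdf_le_one _ _), ENNReal.toReal_ofReal (sub_nonneg.2 hαβ),
    smul_eq_mul, add_comm]

theorem setIntegral_Ioo_comp_quantile (hZ : AEMeasurable Z μ) {f : ℝ → ℝ}
    (hf : Integrable f (μ.map Z)) {α : ℝ} (hα : α ∈ Ioo 0 1) :
    ∫ u in Ioo α 1, f (quantile μ Z u)
      = ∫ ω in {ω | quantile μ Z α ≤ Z ω}, f (Z ω) ∂μ
        + f (quantile μ Z α) * (μ.real {ω | Z ω < quantile μ Z α} - α) := by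
  have := Measure.isProbabilityMeasure_map hZ
  set q := quantile μ Z α
  have hcdf : cdf (μ.map Z) q = μ.real {ω | Z ω < q} + (μ.map Z).real {q} := by
    rw [cdf_eq_real, ← Iio_union_right, measureReal_union (by simp) (measurableSet_singleton q),
      map_measureReal_apply_of_aemeasurable hZ measurableSet_Iio]
    rfl
  have hIci : ∫ ω in {ω | q ≤ Z ω}, f (Z ω) ∂μ = ∫ x in Ici q, f x ∂(μ.map Z) :=
    (setIntegral_map measurableSet_Ici hf.1 hZ).symm
  rw [setIntegral_Ioo_comp_quantile_eq_setIntegral_Ioi hZ hf hα, hIci,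
    setIntegral_Ici_eq_add_setIntegral_Ioi hf.integrableOn, hcdf]
  ring

theorem comp_quantile_ae_eq {δ : Type*} (hZ : AEMeasurable Z μ) {f f₂ : ℝ → δ}
    (h : f =ᵐ[μ.map Z] f₂) :
    f ∘ quantile μ Z =ᵐ[volume.restrict (Ioo 0 1)] f₂ ∘ quantile μ Z :=
  ae_eq_comp (aemeasurable_quantile hZ) (by rwa [map_quantile hZ])

end Quantile

theorem integral_condexp_along_var_general {Ω : Type*} [MeasurableSpace Ω]
    (μ : Measure Ω) [IsProbabilityMeasure μ]
    (X Y : Ω → ℝ) (hX : Measurable X) (hYint : Integrable Y μ)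
    (α : ℝ) (hα : α ∈ Set.Ioo (0 : ℝ) 1)
    (g : ℝ → ℝ) (hg : Measurable g)
    (hver : (fun ω => g (X ω)) =ᵐ[μ] μ[Y | MeasurableSpace.comap X Real.measurableSpace]) :
    (∫ u in Set.Ioo α 1, g (- VaR μ X u))
        = (∫ ω in {ω | quantile μ (fun ω' => - X ω') α ≤ - X ω}, Y ω ∂μ)
          + g (- quantile μ (fun ω' => - X ω') α)
            * ((μ {ω | - X ω < quantile μ (fun ω' => - X ω') α}).toReal - α) ∧
      ∀ g₂ : ℝ → ℝ, Measurable g₂ →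
        (fun ω => g₂ (X ω)) =ᵐ[μ] μ[Y | MeasurableSpace.comap X Real.measurableSpace] →
        (∫ u in Set.Ioo α 1, g (- VaR μ X u)) = ∫ u in Set.Ioo α 1, g₂ (- VaR μ X u) := by
  have hZ : Measurable fun ω => -X ω := hX.neg
  have hgneg : Measurable fun x => g (-x) := hg.comp measurable_neg
  have hf : Integrable (fun x => g (-x)) (μ.map fun ω => -X ω) := by
    refine (integrable_map_measure hgneg.aestronglyMeasurable hZ.aemeasurable).2 ?_
    simpa [Function.comp_def] using integrable_condExp.congr hver.symm
  refine ⟨?_, fun g₂ hg₂ hver₂ => ?_⟩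
  · have hs : MeasurableSet[MeasurableSpace.comap X Real.measurableSpace]
        {ω | quantile μ (fun ω' => -X ω') α ≤ -X ω} :=
      ⟨_, measurableSet_le measurable_const measurable_neg, rfl⟩
    have key := setIntegral_Ioo_comp_quantile hZ.aemeasurable hf hα
    simp only [neg_neg] at key
    rw [← setIntegral_eq_of_ae_eq_condExp hX.comap_le hYint hver hs]
    exact key
  · have hae : (fun x => g (-x)) =ᵐ[μ.map fun ω => -X ω] fun x => g₂ (-x) := by
      refine (ae_map_iff hZ.aemeasurable
        (measurableSet_eq_fun hgneg (hg₂.comp measurable_neg))).2 ?_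
      filter_upwards [hver, hver₂] with ω h h₂
      simp only [Function.comp_apply, neg_neg, h, h₂]
    exact integral_congr_ae (ae_restrict_of_ae_restrict_of_subset (Ioo_subset_Ioo_left hα.1.le)
      (comp_quantile_ae_eq hZ.aemeasurable hae))

/-- For integrable `Y` and `g` with `g ∘ X` a version of `E[Y | σ(X)]`:
`∫_α^1 E[Y | X = -VaR_u(X)] du
  = E[Y·1{-X ≥ q_α(-X)}] + E[Y | -X = q_α(-X)]·(P[-X < q_α(-X)] - α)`,
and the left-hand side does not depend on the chosen version. -/
theorem integral_condexp_along_var {Ω : Type*} [MeasurableSpace Ω]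
    (μ : Measure Ω) [IsProbabilityMeasure μ]
    (X Y : Ω → ℝ) (hX : Measurable X) (hY : Measurable Y) (hYint : Integrable Y μ)
    (α : ℝ) (hα : α ∈ Set.Ioo (0 : ℝ) 1)
    (g : ℝ → ℝ) (hg : Measurable g)
    (hver : (fun ω => g (X ω)) =ᵐ[μ] μ[Y | MeasurableSpace.comap X Real.measurableSpace]) :
    (∫ u in Set.Ioo α 1, g (- VaR μ X u))
        = (∫ ω in {ω | quantile μ (fun ω' => - X ω') α ≤ - X ω}, Y ω ∂μ)
          + g (- quantile μ (fun ω' => - X ω') α)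
            * ((μ {ω | - X ω < quantile μ (fun ω' => - X ω') α}).toReal - α) ∧
      ∀ g₂ : ℝ → ℝ, Measurable g₂ →
        (fun ω => g₂ (X ω)) =ᵐ[μ] μ[Y | MeasurableSpace.comap X Real.measurableSpace] →
        (∫ u in Set.Ioo α 1, g (- VaR μ X u)) = ∫ u in Set.Ioo α 1, g₂ (- VaR μ X u) :=
  integral_condexp_along_var_general μ X Y hX hYint α hα g hg hver
end
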